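/- arXiv:1407.4425 — 11 statements merged into one kernel-verified Lean document; each statement's English description precedes it below -/
import Mathlib

section
/- If a category A is complete, then the class of corecursive algebras for an endofunctor H : A → A is closed under products formed in the category of H-algebras (which are computed on the level of A). In particular, the product of a family of corecursive H-algebras is corecursive. -/
open CategoryTheory CategoryTheory.Limits CategoryTheory.Endofunctor

universe v u

variable {A : Type u} [Category.{v} A]

/-- An `H`-algebra is corecursive if every coalgebra `e : X ⟶ H.obj X` admits a unique
coalgebra-to-algebra morphism into it. -/
def IsCorecursive {H : A ⥤ A} (alg : Endofunctor.Algebra H) : Prop :=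
  ∀ (X : A) (e : X ⟶ H.obj X), ∃! s : X ⟶ alg.a, s = e ≫ H.map s ≫ alg.str

/-!
Products of carriers carry a canonical algebra structure, which is a product in `Alg H`; hence
the forgetful functor `Alg H ⥤ A` preserves every product that exists in `A`, and the carrier of
any product fan in `Alg H` is a product in `A`. Given a coalgebra `e`, the unique solutions
`e†ᵢ` into the factors then induce a morphism into that carrier, and it solves the equation for the
product because the projections are algebra morphisms; uniqueness holds because the projections
are jointly monic and each projection of a solution is a solution into a factor.
-/

namespace CategoryTheory.Endofunctor.Algebra

variable {H : A ⥤ A} {ι : Type*} (D : ι → Algebra H) [HasProduct fun i => (D i).a]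

noncomputable def pi : Algebra H where
  a := ∏ᶜ fun i => (D i).a
  str := Pi.lift fun i => H.map (Pi.π _ i) ≫ (D i).str

@[simp]
lemma pi_str_π (i : ι) : (pi D).str ≫ Pi.π _ i = H.map (Pi.π _ i) ≫ (D i).str :=
  Pi.lift_π _ i

noncomputable def piFan : Fan D :=
  Fan.mk (pi D) fun i => { f := Pi.π _ i, h := (pi_str_π D i).symm }

noncomputable def isLimitPiFan : IsLimit (piFan D) :=
  Fan.IsLimit.mk _
    (fun s =>
      { f := Pi.lift fun i => (s.proj i).f
        h := Pi.hom_ext _ _ fun i => by simp [piFan, pi, ← H.map_comp_assoc] })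
    (fun s i => Algebra.ext (Pi.lift_π _ i))
    (fun s m hm => Algebra.ext (Pi.hom_ext _ _ fun i =>
      (congrArg Hom.f (hm i)).trans (Pi.lift_π (fun i => (s.proj i).f) i).symm))

instance : PreservesLimit (Discrete.functor D) (forget H) :=
  preservesLimit_of_preserves_limit_cone (isLimitPiFan D)
    ((isLimitMapConeFanMkEquiv (forget H) D (piFan D).proj).symm
      (productIsProduct fun i => (D i).a))

end CategoryTheory.Endofunctor.Algebra

theorem IsCorecursive.of_isLimit_carrier_fan {H : A ⥤ A} {ι : Type*}
    {D : ι → Algebra H} {c : Fan D}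
    (hc : IsLimit (Fan.mk c.pt.a fun i => (c.proj i).f)) (hD : ∀ i, IsCorecursive (D i)) :
    IsCorecursive c.pt := by
  intro X e
  have proj_unfold : ∀ (t : X ⟶ c.pt.a) (i : ι),
      (e ≫ H.map t ≫ c.pt.str) ≫ (c.proj i).f = e ≫ H.map (t ≫ (c.proj i).f) ≫ (D i).str := by
    simp
  choose s hs hu using fun i => hD i X e
  have lift_f : ∀ i, Fan.IsLimit.lift hc s ≫ (c.proj i).f = s i := Fan.IsLimit.fac hc s
  refine ⟨Fan.IsLimit.lift hc s, Fan.IsLimit.hom_ext hc _ _ fun i => ?_,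
    fun t ht => Fan.IsLimit.hom_ext hc _ _ fun i => ?_⟩
  · change _ ≫ (c.proj i).f = (_ ≫ _ ≫ _) ≫ (c.proj i).f
    rw [proj_unfold, lift_f]
    exact hs i
  · have ht_i : t ≫ (c.proj i).f = e ≫ H.map (t ≫ (c.proj i).f) ≫ (D i).str := by
      rw [← proj_unfold, ← ht]
    exact (hu i _ ht_i).trans (lift_f i).symm

/-- In a complete category, corecursive algebras are closed under products in `Alg H`:
the product of a family of corecursive algebras (formed in the category of `H`-algebras)
is corecursive. -/
theorem product_of_corecursive_isCorecursive
    [HasLimits A] (H : A ⥤ A) {ι : Type v} (D : ι → Endofunctor.Algebra H)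
    (hD : ∀ i, IsCorecursive (D i))
    (c : Fan D) (hc : IsLimit c) : IsCorecursive c.pt :=
  IsCorecursive.of_isLimit_carrier_fan (isLimitFanMkObjOfIsLimit (Algebra.forget H) D c.proj hc) hD
end

section
/- Let (A,a) be an H-algebra and f : B → A a morphism. Then (A,a) is corecursive if and only if the algebra with carrier HA + B and structure map inl ∘ H[a,f] : H(HA+B) → HA+B is corecursive. -/
/-!
Whenever `i ≫ r = a`, the maps `s ↦ s ≫ r` and `t ↦ e ≫ H.map t ≫ i` are mutually inverse between
the solutions of a coalgebra `e` in the algebra `H.map r ≫ i` and in `a`; the theorem is the case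
`i = inl`, `r = [a, f]`.
-/

open CategoryTheory CategoryTheory.Limits

universe v u

variable {A : Type u} [Category.{v} A]

/-- An algebra structure `a : H.obj A₀ ⟶ A₀` is corecursive if every coalgebra
`e : X ⟶ H.obj X` has a unique solution `s = e ≫ H.map s ≫ a`. -/
def IsCorecursiveAlg (H : A ⥤ A) (A₀ : A) (a : H.obj A₀ ⟶ A₀) : Prop :=
  ∀ (X : A) (e : X ⟶ H.obj X), ∃! s : X ⟶ A₀, s = e ≫ H.map s ≫ a

section

variable {A₀ C X : A}

def IsSolution (H : A ⥤ A) (a : H.obj A₀ ⟶ A₀) (e : X ⟶ H.obj X) (s : X ⟶ A₀) : Prop :=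
  s = e ≫ H.map s ≫ a

variable {H : A ⥤ A} {a : H.obj A₀ ⟶ A₀} {i : H.obj A₀ ⟶ C} {r : C ⟶ A₀}

namespace IsSolution

variable {e : X ⟶ H.obj X}

theorem comp (hir : i ≫ r = a) {s : X ⟶ C} (hs : IsSolution H (H.map r ≫ i) e s) :
    IsSolution H a e (s ≫ r) := by
  unfold IsSolution
  conv_lhs => rw [hs]
  simp [hir]

theorem lift_comp (hir : i ≫ r = a) {t : X ⟶ A₀} (ht : IsSolution H a e t) :
    (e ≫ H.map t ≫ i) ≫ r = t := by
  rw [Category.assoc, Category.assoc, hir, ← ht]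

theorem lift (hir : i ≫ r = a) {t : X ⟶ A₀} (ht : IsSolution H a e t) :
    IsSolution H (H.map r ≫ i) e (e ≫ H.map t ≫ i) := by
  unfold IsSolution
  rw [← H.map_comp_assoc, ht.lift_comp hir]

theorem lift_comp_self {s : X ⟶ C} (hs : IsSolution H (H.map r ≫ i) e s) :
    e ≫ H.map (s ≫ r) ≫ i = s := by
  rw [H.map_comp_assoc, ← hs]

end IsSolution

def solutionEquiv (hir : i ≫ r = a) (e : X ⟶ H.obj X) :
    {s // IsSolution H (H.map r ≫ i) e s} ≃ {t // IsSolution H a e t} where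
  toFun s := ⟨s.1 ≫ r, s.2.comp hir⟩
  invFun t := ⟨e ≫ H.map t.1 ≫ i, t.2.lift hir⟩
  left_inv s := Subtype.ext s.2.lift_comp_self
  right_inv t := Subtype.ext (t.2.lift_comp hir)

theorem IsCorecursiveAlg.iff_of_comp_eq (hir : i ≫ r = a) :
    IsCorecursiveAlg H A₀ a ↔ IsCorecursiveAlg H C (H.map r ≫ i) :=
  forall₂_congr fun _ e => (solutionEquiv hir e).existsUnique_subtype_congr.symm

end

/-- `(A₀, a)` is corecursive iff the algebra `inl ∘ H[a,f]` on `H.obj A₀ ⨿ B` is corecursive. -/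
theorem corecursive_iff_coprod_corecursive
    [HasBinaryCoproducts A] (H : A ⥤ A) (A₀ B : A)
    (a : H.obj A₀ ⟶ A₀) (f : B ⟶ A₀) :
    IsCorecursiveAlg H A₀ a ↔
      IsCorecursiveAlg H (H.obj A₀ ⨿ B) (H.map (coprod.desc a f) ≫ coprod.inl) :=
  IsCorecursiveAlg.iff_of_comp_eq (coprod.inl_desc a f)
end

section
/- If H has a terminal coalgebra τ : T → HT, then the algebra τ⁻¹ : HT → T (structure inverted via Lambek's Lemma) is corecursive, and moreover it is the initial corecursive algebra: for every corecursive algebra (A,a) there is a unique H-algebra homomorphism from (T, τ⁻¹) to (A,a). -/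
/-!
Because `τ` is invertible, a morphism `s` solves `s = e ≫ H.map s ≫ τ⁻¹` exactly when it is a
coalgebra morphism `(X, e) ⟶ (T, τ)`, so terminality of `T` makes `τ⁻¹` corecursive. Dually, a
morphism `h` is an algebra morphism `(T, τ⁻¹) ⟶ (A₀, a)` exactly when it solves
`h = τ ≫ H.map h ≫ a`, so corecursiveness of `a`, applied to the coalgebra `τ`, gives initiality.
-/

open CategoryTheory CategoryTheory.Limits CategoryTheory.Endofunctor

universe v u

variable {A : Type u} [Category.{v} A]

section

variable {H : A ⥤ A}

theorem existsUnique_coalgebra_hom_of_isTerminal {T : Coalgebra H} (hT : IsTerminal T)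
    (X : Coalgebra H) : ∃! s : X.V ⟶ T.V, X.str ≫ H.map s = s ≫ T.str :=
  ⟨(hT.from X).f, (hT.from X).h,
    fun s hs => congrArg Coalgebra.Hom.f (hT.hom_ext ⟨s, hs⟩ (hT.from X))⟩

theorem isCorecursiveAlg_inv_str_of_isTerminal {T : Coalgebra H} (hT : IsTerminal T)
    [IsIso T.str] : IsCorecursiveAlg H T.V (inv T.str) := by
  intro X e
  simpa only [← Category.assoc, IsIso.eq_comp_inv, eq_comm] using
    existsUnique_coalgebra_hom_of_isTerminal hT ⟨X, e⟩

theorem IsCorecursiveAlg.existsUnique_inv_comp_eq {A₀ X : A} {a : H.obj A₀ ⟶ A₀}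
    (ha : IsCorecursiveAlg H A₀ a) (c : X ⟶ H.obj X) [IsIso c] :
    ∃! h : X ⟶ A₀, inv c ≫ h = H.map h ≫ a := by
  simpa only [IsIso.inv_comp_eq] using ha X c

end

theorem terminal_coalgebra_initial_corecursive_general (H : A ⥤ A)
    (T : Endofunctor.Coalgebra H) (hT : IsTerminal T)
    (t : H.obj T.V ⟶ T.V) (ht1 : T.str ≫ t = 𝟙 T.V) :
    IsCorecursiveAlg H T.V t ∧
      ∀ (A₀ : A) (a : H.obj A₀ ⟶ A₀), IsCorecursiveAlg H A₀ a →
        ∃! h : T.V ⟶ A₀, t ≫ h = H.map h ≫ a := by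
  have := Coalgebra.Terminal.str_isIso hT
  obtain rfl : t = inv T.str := (IsIso.inv_eq_of_hom_inv_id ht1).symm
  exact ⟨isCorecursiveAlg_inv_str_of_isTerminal hT,
    fun _ _ ha => ha.existsUnique_inv_comp_eq T.str⟩

/-- If `(T, τ)` is a terminal coalgebra and `t` is the (two-sided) inverse of `τ` provided
by Lambek's Lemma, then the algebra `(T, t)` is corecursive, and it is the initial
corecursive algebra: to every corecursive algebra there is a unique algebra homomorphism. -/
theorem terminal_coalgebra_initial_corecursive (H : A ⥤ A)
    (T : Endofunctor.Coalgebra H) (hT : IsTerminal T)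
    (t : H.obj T.V ⟶ T.V) (ht1 : T.str ≫ t = 𝟙 T.V) (ht2 : t ≫ T.str = 𝟙 (H.obj T.V)) :
    IsCorecursiveAlg H T.V t ∧
      ∀ (A₀ : A) (a : H.obj A₀ ⟶ A₀), IsCorecursiveAlg H A₀ a →
        ∃! h : T.V ⟶ A₀, t ≫ h = H.map h ≫ a :=
  terminal_coalgebra_initial_corecursive_general H T hT t ht1
end

section
/- Let (T, τ) be a terminal coalgebra for H. The category of Bloom algebras for H (with solution-preserving homomorphisms) is isomorphic to the slice category (T, τ⁻¹)/Alg H of H-algebras under the algebra (T, τ⁻¹). -/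
/-! A Bloom algebra `B` is determined by its algebra structure and the single solution `sol T`:
functoriality along the unique coalgebra map `!_X : X ⟶ T` forces `sol X = sol T ∘ !_X`, and the
solution equation for `(T, τ)` says precisely that `sol T` is an algebra map `(T, τ⁻¹) ⟶ B`.
Conversely every algebra map `u` out of `(T, τ⁻¹)` gives the functorial solution `u ∘ !_X`,
and `!_T = id` makes the two constructions inverse to each other. -/

open CategoryTheory CategoryTheory.Limits CategoryTheory.Endofunctor

universe v u

variable {A : Type u} [Category.{v} A]

/-- A Bloom algebra: an `H`-algebra together with a functorial solution operation. -/
structure BloomAlg (H : A ⥤ A) where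
  a : A
  str : H.obj a ⟶ a
  sol : ∀ X : Endofunctor.Coalgebra H, X.V ⟶ a
  isSol : ∀ X : Endofunctor.Coalgebra H, sol X = X.str ≫ H.map (sol X) ≫ str
  functorial : ∀ (X Y : Endofunctor.Coalgebra H) (h : X ⟶ Y), h.f ≫ sol Y = sol X

/-- A homomorphism of Bloom algebras: a solution-preserving algebra homomorphism. -/
@[ext]
structure BloomHom {H : A ⥤ A} (B C : BloomAlg H) where
  f : B.a ⟶ C.a
  hom : B.str ≫ f = H.map f ≫ C.str
  pres : ∀ X : Endofunctor.Coalgebra H, B.sol X ≫ f = C.sol X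

instance {H : A ⥤ A} : Category (BloomAlg H) where
  Hom := BloomHom
  id B := ⟨𝟙 _, by simp, fun X => by simp⟩
  comp {B C D} f g := ⟨f.f ≫ g.f,
    by rw [← Category.assoc, f.hom, Category.assoc, g.hom, H.map_comp, Category.assoc],
    fun X => by rw [← Category.assoc, f.pres, g.pres]⟩
  id_comp f := by apply BloomHom.ext; simp
  comp_id f := by apply BloomHom.ext; simp
  assoc f g h := by apply BloomHom.ext; simp

namespace BloomHom

variable {H : A ⥤ A}

theorem comp_f {B C D : BloomAlg H} (f : B ⟶ C) (g : C ⟶ D) : (f ≫ g).f = f.f ≫ g.f :=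
  rfl

theorem eqToHom_f {B C : BloomAlg H} (h : B = C) :
    (eqToHom h : B ⟶ C).f = eqToHom (congrArg BloomAlg.a h) := by
  subst h
  rfl

end BloomHom

namespace BloomAlg

variable {H : A ⥤ A}

def solHom (B : BloomAlg H) (X : Coalgebra H) (t : H.obj X.V ⟶ X.V)
    (ht : t ≫ X.str = 𝟙 (H.obj X.V)) :
    Endofunctor.Algebra.mk X.V t ⟶ Endofunctor.Algebra.mk B.a B.str where
  f := B.sol X
  h := by
    conv_rhs => rw [B.isSol X]
    rw [← Category.assoc, ht, Category.id_comp]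

variable (H) {T : Coalgebra H} (t : H.obj T.V ⟶ T.V)

def toUnder (ht : t ≫ T.str = 𝟙 (H.obj T.V)) :
    BloomAlg H ⥤ Under (Endofunctor.Algebra.mk T.V t) where
  obj B := Under.mk (B.solHom T t ht)
  map f := Under.homMk ⟨f.f, f.hom.symm⟩ (Endofunctor.Algebra.Hom.ext (f.pres T))

def ofUnder (hT : IsTerminal T) (ht : T.str ≫ t = 𝟙 T.V) :
    Under (Endofunctor.Algebra.mk T.V t) ⥤ BloomAlg H where
  obj u :=
    { a := u.right.a
      str := u.right.str
      sol X := (hT.from X).f ≫ u.hom.f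
      isSol X := by
        rw [H.map_comp, Category.assoc, u.hom.h, ← Category.assoc X.str, (hT.from X).h,
          Category.assoc, ← Category.assoc T.str]
        dsimp only
        rw [ht, Category.id_comp]
      functorial X Y h := by
        rw [← Category.assoc, ← Coalgebra.comp_f, hT.hom_ext (h ≫ hT.from Y) (hT.from X)] }
  map m :=
    { f := m.right.f
      hom := m.right.h.symm
      pres X := by
        dsimp only
        rw [Category.assoc, ← Endofunctor.Algebra.comp_f, Under.w m] }

variable {H t} (hT : IsTerminal T) (ht1 : T.str ≫ t = 𝟙 T.V)
  (ht2 : t ≫ T.str = 𝟙 (H.obj T.V))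

theorem toUnder_comp_ofUnder : toUnder H t ht2 ⋙ ofUnder H t hT ht1 = 𝟭 (BloomAlg H) := by
  refine CategoryTheory.Functor.ext (fun B => ?_) (fun B C f => ?_)
  · obtain ⟨a, str, sol, isSol, functorial⟩ := B
    show BloomAlg.mk a str (fun X => (hT.from X).f ≫ sol T) _ _ =
      ⟨a, str, sol, isSol, functorial⟩
    congr 1
    funext X
    exact functorial X T (hT.from X)
  · apply BloomHom.ext
    rw [BloomHom.comp_f, BloomHom.comp_f, BloomHom.eqToHom_f, BloomHom.eqToHom_f]
    show f.f = 𝟙 B.a ≫ f.f ≫ 𝟙 C.a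
    simp

theorem ofUnder_comp_toUnder :
    ofUnder H t hT ht1 ⋙ toUnder H t ht2 = 𝟭 (Under (Endofunctor.Algebra.mk T.V t)) := by
  have h_from_T : (hT.from T).f = 𝟙 T.V := by
    rw [hT.hom_ext (hT.from T) (𝟙 T), Coalgebra.id_f]
  refine CategoryTheory.Functor.ext (fun u => ?_) (fun u v m => ?_)
  · refine StructuredArrow.obj_ext _ _ rfl (Endofunctor.Algebra.Hom.ext ?_)
    show ((hT.from T).f ≫ u.hom.f) ≫ 𝟙 _ = u.hom.f
    rw [h_from_T, Category.id_comp, Category.comp_id]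
  · ext
    simp only [Under.comp_right, Under.eqToHom_right, Endofunctor.Algebra.comp_f]
    show m.right.f = 𝟙 u.right.a ≫ m.right.f ≫ 𝟙 v.right.a
    simp

end BloomAlg

/-- The category of Bloom algebras for `H` is isomorphic to the slice category
`(T, τ⁻¹)/Alg H` under the terminal-coalgebra algebra. -/
theorem bloomAlg_iso_under_terminal_coalgebra (H : A ⥤ A)
    (T : Endofunctor.Coalgebra H) (hT : IsTerminal T)
    (t : H.obj T.V ⟶ T.V) (ht1 : T.str ≫ t = 𝟙 T.V) (ht2 : t ≫ T.str = 𝟙 (H.obj T.V)) :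
    ∃ (F : BloomAlg H ⥤ Under (Endofunctor.Algebra.mk T.V t))
      (G : Under (Endofunctor.Algebra.mk T.V t) ⥤ BloomAlg H),
      F ⋙ G = 𝟭 (BloomAlg H) ∧ G ⋙ F = 𝟭 (Under (Endofunctor.Algebra.mk T.V t)) :=
  ⟨BloomAlg.toUnder H t ht2, BloomAlg.ofUnder H t hT ht1,
    BloomAlg.toUnder_comp_ofUnder hT ht1 ht2, BloomAlg.ofUnder_comp_toUnder hT ht1 ht2⟩
end

section
/- A unary algebra a : A → A in a category with terminal object 1 (an algebra for H = Id) carries a Bloom algebra structure if and only if a has a fixpoint, i.e., a morphism t : 1 → A with a ∘ t = t. Given a fixpoint t, a Bloom structure is defined by e† = t ∘ ! : X → A for every e : X → X; conversely, given a Bloom structure, id₁† : 1 → A is a fixpoint of a. -/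
open CategoryTheory CategoryTheory.Limits

universe v u

variable {A : Type u} [Category.{v} A]

/-- A Bloom algebra structure on an `H`-algebra `(A₀, a)`: a functorial solution operation. -/
structure BloomStructure (H : A ⥤ A) (A₀ : A) (a : H.obj A₀ ⟶ A₀) where
  sol : ∀ X : A, (X ⟶ H.obj X) → (X ⟶ A₀)
  isSol : ∀ (X : A) (e : X ⟶ H.obj X), sol X e = e ≫ H.map (sol X e) ≫ a
  functorial : ∀ (X Y : A) (e : X ⟶ H.obj X) (f : Y ⟶ H.obj Y) (h : X ⟶ Y),
    e ≫ H.map h = h ≫ f → h ≫ sol Y f = sol X e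

namespace BloomStructure

variable {A₀ : A} {a : A₀ ⟶ A₀}

theorem sol_id_comp (B : BloomStructure (Functor.id A) A₀ a) (X : A) :
    B.sol X (𝟙 X) ≫ a = B.sol X (𝟙 X) := by
  conv_rhs => rw [B.isSol]
  exact (Category.id_comp _).symm

@[simps]
noncomputable def ofFixpoint [HasTerminal A] (t : ⊤_ A ⟶ A₀) (ht : t ≫ a = t) :
    BloomStructure (Functor.id A) A₀ a where
  sol X _ := terminal.from X ≫ t
  isSol X e := by
    rw [Functor.id_map, Category.assoc, ht]
    exact (terminal.comp_from_assoc e t).symm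
  functorial X Y e f h _ := terminal.comp_from_assoc h t

end BloomStructure

/-- A unary algebra `a : A₀ ⟶ A₀` carries a Bloom structure iff `a` has a fixpoint
`t : 1 ⟶ A₀` with `a ∘ t = t`. Given a fixpoint `t`, `e† = t ∘ !` defines a Bloom
structure; conversely, `(id 1)†` is a fixpoint of `a`. -/
theorem unary_bloom_iff_fixpoint [HasTerminal A] (A₀ : A) (a : A₀ ⟶ A₀) :
    (Nonempty (BloomStructure (Functor.id A) A₀ a) ↔ ∃ t : ⊤_ A ⟶ A₀, t ≫ a = t)
    ∧ (∀ t : ⊤_ A ⟶ A₀, t ≫ a = t →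
        ∃ B : BloomStructure (Functor.id A) A₀ a,
          ∀ (X : A) (e : X ⟶ X), B.sol X e = terminal.from X ≫ t)
    ∧ (∀ B : BloomStructure (Functor.id A) A₀ a,
        B.sol (⊤_ A) (𝟙 (⊤_ A)) ≫ a = B.sol (⊤_ A) (𝟙 (⊤_ A))) := by
  exact ⟨⟨fun ⟨B⟩ => ⟨_, B.sol_id_comp (⊤_ A)⟩, fun ⟨t, ht⟩ => ⟨.ofFixpoint t ht⟩⟩,
    fun t ht => ⟨.ofFixpoint t ht, BloomStructure.ofFixpoint_sol t ht⟩,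
    fun B => B.sol_id_comp (⊤_ A)⟩
end

section
/- If (A, a, †) is a Bloom algebra and h : (A,a) → (B,b) is an H-algebra homomorphism, then there is a unique Bloom algebra structure ‡ on (B,b) such that h is solution-preserving; it is given by e‡ = h ∘ e† for every coalgebra e : X → HX. -/
open CategoryTheory

universe v u

variable {A : Type u} [Category.{v} A]

theorem solution_comp_algHom {H : A ⥤ A} {A₀ B₀ X : A} {a : H.obj A₀ ⟶ A₀}
    {b : H.obj B₀ ⟶ B₀} {h : A₀ ⟶ B₀} (hhom : a ≫ h = H.map h ≫ b)
    {e : X ⟶ H.obj X} {s : X ⟶ A₀} (hs : s = e ≫ H.map s ≫ a) :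
    s ≫ h = e ≫ H.map (s ≫ h) ≫ b := by
  conv_lhs => rw [hs]
  rw [Category.assoc, Category.assoc, hhom, H.map_comp, Category.assoc]

namespace BloomStructure

variable {H : A ⥤ A} {A₀ B₀ : A} {a : H.obj A₀ ⟶ A₀} {b : H.obj B₀ ⟶ B₀}

def transport (Bs : BloomStructure H A₀ a) (h : A₀ ⟶ B₀) (hhom : a ≫ h = H.map h ≫ b) :
    BloomStructure H B₀ b where
  sol X e := Bs.sol X e ≫ h
  isSol X e := solution_comp_algHom hhom (Bs.isSol X e)
  functorial X Y e f g hcomm := by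
    rw [← Category.assoc, Bs.functorial X Y e f g hcomm]

end BloomStructure

/-- A Bloom structure transports along algebra homomorphisms: given a Bloom algebra
`(A₀, a, †)` and an algebra homomorphism `h : (A₀,a) ⟶ (B₀,b)`, there is a unique Bloom
structure `‡` on `(B₀, b)` making `h` solution-preserving, namely `e‡ = e† ≫ h`. -/
theorem bloom_structure_induced_by_hom (H : A ⥤ A)
    (A₀ B₀ : A) (a : H.obj A₀ ⟶ A₀) (b : H.obj B₀ ⟶ B₀)
    (Bs : BloomStructure H A₀ a)
    (h : A₀ ⟶ B₀) (hhom : a ≫ h = H.map h ≫ b) :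
    ∃ C : BloomStructure H B₀ b,
      (∀ (X : A) (e : X ⟶ H.obj X), C.sol X e = Bs.sol X e ≫ h) ∧
      ∀ C' : BloomStructure H B₀ b,
        (∀ (X : A) (e : X ⟶ H.obj X), Bs.sol X e ≫ h = C'.sol X e) →
        ∀ (X : A) (e : X ⟶ H.obj X), C'.sol X e = C.sol X e :=
  ⟨Bs.transport h hhom, fun _ _ => rfl, fun _ hC' X e => (hC' X e).symm⟩
end

section
/- Suppose H has a terminal coalgebra (T, τ), a free H-algebra FY on Y with universal arrow η : Y → FY, and the coproduct T ⊕ FY exists in Alg H. Then T ⊕ FY, equipped with the Bloom structure induced by the coproduct injection inl : T → T ⊕ FY, is the free Bloom algebra on Y with universal arrow inr ∘ η : Y → T ⊕ FY: for every Bloom algebra (B,b,‡) and every morphism g : Y → B there is a unique solution-preserving algebra homomorphism h : T ⊕ FY → B with h ∘ inr ∘ η = g. -/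
open CategoryTheory CategoryTheory.Limits CategoryTheory.Endofunctor

universe v u

variable {A : Type u} [Category.{v} A]

/-!
All solutions in `C` are `s ≫ i` with `s` the unique coalgebra morphism into the terminal
coalgebra, so by functoriality a morphism `k : C ⟶ B₀` preserves solutions exactly when
`i ≫ k` is the solution of `τ` in `B₀`. Since `τ` is invertible, that solution is an algebra
morphism `(T, τ⁻¹) ⟶ (B₀, b)`; pairing it with the free extension of `g` through the
coproduct gives the required homomorphism, and both universal properties give uniqueness.
-/

namespace BloomStructure

variable {H : A ⥤ A} {B₀ : A} {b : H.obj B₀ ⟶ B₀} (E : BloomStructure H B₀ b)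

theorem hom_f_comp_sol {X Y : Coalgebra H} (h : X ⟶ Y) :
    h.f ≫ E.sol Y.V Y.str = E.sol X.V X.str :=
  E.functorial X.V Y.V X.str Y.str h.f h.h

theorem sol_isAlgHom_of_comp_eq_id {X : A} (e : X ⟶ H.obj X) (t : H.obj X ⟶ X)
    (ht : t ≫ e = 𝟙 (H.obj X)) : t ≫ E.sol X e = H.map (E.sol X e) ≫ b := by
  conv_lhs => rw [E.isSol X e, ← Category.assoc, ht, Category.id_comp]

end BloomStructure

section TerminalCoalgebra

variable {H : A ⥤ A} {T : Coalgebra H} {t : H.obj T.V ⟶ T.V}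

theorem CategoryTheory.Endofunctor.Coalgebra.Hom.f_eq_str_comp_map_comp {X : Coalgebra H}
    (h : X ⟶ T) (ht : T.str ≫ t = 𝟙 T.V) : h.f = X.str ≫ H.map h.f ≫ t := by
  rw [← Category.assoc, h.h, Category.assoc, ht, Category.comp_id]

variable (hT : IsTerminal T) {C B₀ : A} {c : H.obj C ⟶ C} {b : H.obj B₀ ⟶ B₀}
  {Ds : BloomStructure H C c} (E : BloomStructure H B₀ b) {i : T.V ⟶ C}

theorem preserves_sol_iff_of_sol_eq (hsol : ∀ (X : A) (e : X ⟶ H.obj X),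
      Ds.sol X e = (hT.from ⟨X, e⟩).f ≫ i) (k : C ⟶ B₀) :
    (∀ (X : A) (e : X ⟶ H.obj X), Ds.sol X e ≫ k = E.sol X e) ↔
      i ≫ k = E.sol T.V T.str := by
  constructor
  · intro hk
    have hsolT : Ds.sol T.V T.str = i := by
      rw [hsol, hT.hom_ext (hT.from ⟨T.V, T.str⟩) (𝟙 T)]
      exact Category.id_comp i
    rw [← hsolT]
    exact hk T.V T.str
  · intro hk X e
    rw [hsol, Category.assoc, hk]
    exact E.hom_f_comp_sol (hT.from ⟨X, e⟩)

end TerminalCoalgebra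

theorem free_bloom_algebra_is_coproduct_general (H : A ⥤ A)
    (T : Endofunctor.Coalgebra H) (hT : IsTerminal T)
    (t : H.obj T.V ⟶ T.V) (ht1 : T.str ≫ t = 𝟙 T.V) (ht2 : t ≫ T.str = 𝟙 (H.obj T.V))
    (Y F₀ : A) (φ : H.obj F₀ ⟶ F₀) (η : Y ⟶ F₀)
    (hfree : ∀ (B₀ : A) (b : H.obj B₀ ⟶ B₀) (g : Y ⟶ B₀),
      ∃! h : F₀ ⟶ B₀, (φ ≫ h = H.map h ≫ b) ∧ η ≫ h = g)
    (C : A) (c : H.obj C ⟶ C) (i : T.V ⟶ C) (j : F₀ ⟶ C)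
    (hj : φ ≫ j = H.map j ≫ c)
    (hcop : ∀ (D : A) (d : H.obj D ⟶ D) (f : T.V ⟶ D) (g : F₀ ⟶ D),
      t ≫ f = H.map f ≫ d → φ ≫ g = H.map g ≫ d →
      ∃! k : C ⟶ D, (c ≫ k = H.map k ≫ d) ∧ i ≫ k = f ∧ j ≫ k = g)
    (Ds : BloomStructure H C c)
    (hDs : ∀ (X : A) (e : X ⟶ H.obj X) (s : X ⟶ T.V),
      s = e ≫ H.map s ≫ t → Ds.sol X e = s ≫ i)
    (B₀ : A) (b : H.obj B₀ ⟶ B₀) (E : BloomStructure H B₀ b) (g : Y ⟶ B₀) :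
    ∃! h : C ⟶ B₀, (c ≫ h = H.map h ≫ b) ∧
      (∀ (X : A) (e : X ⟶ H.obj X), Ds.sol X e ≫ h = E.sol X e) ∧
      (η ≫ j) ≫ h = g := by
  have hsol (X : A) (e : X ⟶ H.obj X) : Ds.sol X e = (hT.from ⟨X, e⟩).f ≫ i :=
    hDs X e _ ((hT.from ⟨X, e⟩).f_eq_str_comp_map_comp ht1)
  obtain ⟨f, ⟨hf_alg, hf_η⟩, hf_uniq⟩ := hfree B₀ b g
  obtain ⟨k, ⟨hk_alg, hk_i, hk_j⟩, hk_uniq⟩ :=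
    hcop B₀ b (E.sol T.V T.str) f (E.sol_isAlgHom_of_comp_eq_id T.str t ht2) hf_alg
  have hpres := preserves_sol_iff_of_sol_eq hT E hsol
  refine ⟨k, ⟨hk_alg, (hpres k).2 hk_i, ?_⟩, ?_⟩
  · rw [Category.assoc, hk_j, hf_η]
  · rintro h ⟨h_alg, h_sol, h_η⟩
    refine hk_uniq h ⟨h_alg, (hpres h).1 h_sol, hf_uniq _ ⟨?_, ?_⟩⟩
    · rw [← Category.assoc, hj, Category.assoc, h_alg, ← Category.assoc, ← H.map_comp]
    · rwa [← Category.assoc]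

/-- Suppose `H` has a terminal coalgebra `(T, τ)` (with `t = τ⁻¹`), a free algebra
`(F₀, φ)` on `Y` with universal arrow `η`, and a coproduct `(C, c)` of `(T,t)` and
`(F₀,φ)` in `Alg H` with injections `i, j`. Equip `C` with the Bloom structure induced
by `i` (solutions are `s ≫ i` for the solution `s` in `T`). Then `C` is the free Bloom
algebra on `Y` with universal arrow `η ≫ j`: every morphism `g : Y ⟶ B₀` into a Bloom
algebra extends uniquely to a solution-preserving algebra homomorphism. -/
theorem free_bloom_algebra_is_coproduct (H : A ⥤ A)
    (T : Endofunctor.Coalgebra H) (hT : IsTerminal T)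
    (t : H.obj T.V ⟶ T.V) (ht1 : T.str ≫ t = 𝟙 T.V) (ht2 : t ≫ T.str = 𝟙 (H.obj T.V))
    (Y F₀ : A) (φ : H.obj F₀ ⟶ F₀) (η : Y ⟶ F₀)
    (hfree : ∀ (B₀ : A) (b : H.obj B₀ ⟶ B₀) (g : Y ⟶ B₀),
      ∃! h : F₀ ⟶ B₀, (φ ≫ h = H.map h ≫ b) ∧ η ≫ h = g)
    (C : A) (c : H.obj C ⟶ C) (i : T.V ⟶ C) (j : F₀ ⟶ C)
    (hi : t ≫ i = H.map i ≫ c) (hj : φ ≫ j = H.map j ≫ c)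
    (hcop : ∀ (D : A) (d : H.obj D ⟶ D) (f : T.V ⟶ D) (g : F₀ ⟶ D),
      t ≫ f = H.map f ≫ d → φ ≫ g = H.map g ≫ d →
      ∃! k : C ⟶ D, (c ≫ k = H.map k ≫ d) ∧ i ≫ k = f ∧ j ≫ k = g)
    (Ds : BloomStructure H C c)
    (hDs : ∀ (X : A) (e : X ⟶ H.obj X) (s : X ⟶ T.V),
      s = e ≫ H.map s ≫ t → Ds.sol X e = s ≫ i)
    (B₀ : A) (b : H.obj B₀ ⟶ B₀) (E : BloomStructure H B₀ b) (g : Y ⟶ B₀) :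
    ∃! h : C ⟶ B₀, (c ≫ h = H.map h ≫ b) ∧
      (∀ (X : A) (e : X ⟶ H.obj X), Ds.sol X e ≫ h = E.sol X e) ∧
      (η ≫ j) ≫ h = g :=
  free_bloom_algebra_is_coproduct_general H T hT t ht1 ht2 Y F₀ φ η hfree C c i j hj hcop Ds hDs B₀
    b E g
end

section
/- For H = Id on Set, the free corecursive algebra on a set Y is MY = ℕ × Y + 1: the unary algebra whose operation sends (n, y) to (n+1, y) and fixes the point of 1, with universal arrow y ↦ (0, y). -/
/-!
A solution of `s = Mstr ∘ s ∘ e` never takes a value `inl (n, y)`: following `e` would lower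
`n` by one at each step, while `Mstr` never produces level `0`. So the constant map to the
point of `1` is the only solution. A homomorphism out of `ℕ × Y + 1` is determined by `g` on
level `0`, by iterating `b` on the higher levels, and by a fixed point of `b` on the point of
`1`; corecursiveness of `b`, applied to `id` on a singleton, makes that fixed point unique.
-/

/-- A unary algebra `b : B → B` in `Set` is corecursive if every map `e : X → X` has a
unique solution `s` with `s = b ∘ s ∘ e`. -/
def IsCorecUnary (B : Type) (b : B → B) : Prop :=
  ∀ (X : Type) (e : X → X), ∃! s : X → B, ∀ x, s x = b (s (e x))

/-- The algebra structure on `MY = ℕ × Y + 1`: `(n, y) ↦ (n+1, y)` and the point of `1`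
is fixed. -/
def Mstr (Y : Type) : ℕ × Y ⊕ PUnit → ℕ × Y ⊕ PUnit
  | Sum.inl (n, y) => Sum.inl (n + 1, y)
  | Sum.inr u => Sum.inr u

open Function

theorem IsCorecUnary.existsUnique_isFixedPt {B : Type} {b : B → B} (hb : IsCorecUnary B b) :
    ∃! p : B, IsFixedPt b p := by
  obtain ⟨s, hs, hs_unique⟩ := hb PUnit id
  refine ⟨s ⟨⟩, (hs ⟨⟩).symm, fun p hp => ?_⟩
  exact congrFun (hs_unique (fun _ => p) fun _ => hp.symm) ⟨⟩

namespace Mstr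

variable {Y : Type}

theorem eq_inl_iff {m : ℕ × Y ⊕ PUnit} {n : ℕ} {y : Y} :
    Mstr Y m = Sum.inl (n, y) ↔ ∃ k, n = k + 1 ∧ m = Sum.inl (k, y) := by
  rcases m with ⟨k, y'⟩ | _ <;> simp [Mstr, eq_comm, and_comm]

theorem eq_inr_of_forall_eq_comp {X : Type} {e : X → X} {s : X → ℕ × Y ⊕ PUnit.{1}}
    (hs : ∀ x, s x = Mstr Y (s (e x))) (x : X) : s x = Sum.inr ⟨⟩ := by
  have not_inl : ∀ n x y, s x ≠ Sum.inl (n, y) := by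
    intro n
    induction n with
    | zero =>
      intro x y hx
      obtain ⟨k, hk, -⟩ := eq_inl_iff.mp ((hs x).symm.trans hx)
      omega
    | succ n ih =>
      intro x y hx
      obtain ⟨k, hk, hex⟩ := eq_inl_iff.mp ((hs x).symm.trans hx)
      exact ih (e x) y (by rwa [Nat.succ_inj.mp hk])
  rcases hx : s x with ⟨n, y⟩ | ⟨⟩
  · exact absurd hx (not_inl n x y)
  · rfl

theorem isCorecUnary (Y : Type) : IsCorecUnary (ℕ × Y ⊕ PUnit) (Mstr Y) := fun _ _ =>
  ⟨fun _ => Sum.inr ⟨⟩, fun _ => rfl, fun _ hs => funext (eq_inr_of_forall_eq_comp hs)⟩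

def lift {B : Type} (b : B → B) (p : B) (g : Y → B) : ℕ × Y ⊕ PUnit → B
  | Sum.inl (n, y) => b^[n] (g y)
  | Sum.inr _ => p

variable {B : Type} {b : B → B}

theorem lift_Mstr {p : B} (hp : IsFixedPt b p) (g : Y → B) (m : ℕ × Y ⊕ PUnit) :
    lift b p g (Mstr Y m) = b (lift b p g m) := by
  rcases m with ⟨n, y⟩ | _
  · exact iterate_succ_apply' b n (g y)
  · exact hp.symm

theorem eq_lift_of_forall_comp_Mstr {h : ℕ × Y ⊕ PUnit → B}
    (hh : ∀ m, h (Mstr Y m) = b (h m)) :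
    h = lift b (h (Sum.inr ⟨⟩)) (fun y => h (Sum.inl (0, y))) := by
  funext m
  rcases m with ⟨n, y⟩ | ⟨⟩
  · induction n with
    | zero => rfl
    | succ n ih =>
      calc h (Sum.inl (n + 1, y)) = b (h (Sum.inl (n, y))) := hh (Sum.inl (n, y))
        _ = b^[n + 1] (h (Sum.inl (0, y))) := by rw [ih, lift, iterate_succ_apply']
  · rfl

end Mstr

/-- For `H = Id` on `Set`, `MY = ℕ × Y + 1` with the above operation is the free
corecursive algebra on `Y`, with universal arrow `y ↦ (0, y)`. -/
theorem free_corecursive_unary_algebra (Y : Type) :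
    IsCorecUnary (ℕ × Y ⊕ PUnit) (Mstr Y) ∧
      ∀ (B : Type) (b : B → B), IsCorecUnary B b → ∀ g : Y → B,
        ∃! h : ℕ × Y ⊕ PUnit → B,
          (∀ m, h (Mstr Y m) = b (h m)) ∧ ∀ y, h (Sum.inl (0, y)) = g y := by
  refine ⟨Mstr.isCorecUnary Y, fun B b hb g => ?_⟩
  obtain ⟨p, hp, hp_unique⟩ := hb.existsUnique_isFixedPt
  refine ⟨Mstr.lift b p g, ⟨Mstr.lift_Mstr hp g, fun _ => rfl⟩, ?_⟩
  rintro h ⟨hh, hg⟩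
  have hh_point : h (Sum.inr ⟨⟩) = p := hp_unique _ (hh (Sum.inr ⟨⟩)).symm
  rw [Mstr.eq_lift_of_forall_comp_Mstr hh, hh_point, funext hg]
end

section
/- Let M be the monad of free corecursive algebras for H, which is ideal with ideal HM. Then M is a corecursive monad: every ideal equation morphism e = δ_X ∘ e₀ with e₀ : X → HMX has, in every corecursive H-algebra (A,a) with induced Eilenberg-Moore structure ā : MA → A, a unique solution e† : X → A satisfying e† = ā ∘ M(e†) ∘ e. -/
/-!
For `s : X ⟶ A₀` put `ŝ = M.map s ≫ ā`, the homomorphic extension of `s` to `(M X, δ X)`.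
By freeness, `e₀` extends to a homomorphism `m : (M X, δ X) ⟶ (H (M X), H δ X)`, which is
also a coalgebra. An extension `ŝ` solves `m` in the corecursive algebra `(A₀, a)` exactly
when `s` solves the ideal equation, and the unique solution of `m` is itself a homomorphism,
hence of the form `ŝ`.
-/

open CategoryTheory

universe v u

variable {A : Type u} [Category.{v} A]

section

variable (H : A ⥤ A)

def IsAlgHom {B C : A} (b : H.obj B ⟶ B) (c : H.obj C ⟶ C) (f : B ⟶ C) : Prop :=
  b ≫ f = H.map f ≫ c

variable {H}

lemma isAlgHom_str {B : A} (b : H.obj B ⟶ B) : IsAlgHom H (H.map b) b b := rfl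

lemma IsAlgHom.comp {B C D : A} {b : H.obj B ⟶ B} {c : H.obj C ⟶ C} {d : H.obj D ⟶ D}
    {f : B ⟶ C} {g : C ⟶ D} (hf : IsAlgHom H b c f) (hg : IsAlgHom H c d g) :
    IsAlgHom H b d (f ≫ g) := by
  unfold IsAlgHom at *
  rw [← Category.assoc, hf, Category.assoc, hg, ← Category.assoc, H.map_comp]

lemma IsAlgHom.map {B C : A} {b : H.obj B ⟶ B} {c : H.obj C ⟶ C} {f : B ⟶ C}
    (hf : IsAlgHom H b c f) : IsAlgHom H (H.map b) (H.map c) (H.map f) := by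
  unfold IsAlgHom at *
  rw [← H.map_comp, hf, H.map_comp]

lemma IsCorecursiveAlg.map {B : A} {b : H.obj B ⟶ B} (hb : IsCorecursiveAlg H B b) :
    IsCorecursiveAlg H (H.obj B) (H.map b) := by
  intro X e
  obtain ⟨s, hs, hs_uniq⟩ := hb X e
  refine ⟨e ≫ H.map s, ?_, fun t ht => ?_⟩
  · show e ≫ H.map s = e ≫ H.map (e ≫ H.map s) ≫ H.map b
    rw [← H.map_comp, Category.assoc, ← hs]
  · have hts : t ≫ b = e ≫ H.map (t ≫ b) ≫ b := by
      conv_lhs => rw [ht]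
      rw [H.map_comp, Category.assoc, Category.assoc]
    rw [ht, ← H.map_comp, hs_uniq _ hts]

lemma IsCorecursiveAlg.isAlgHom_of_solution {B C : A} {b : H.obj B ⟶ B}
    (hb : IsCorecursiveAlg H B b) {c : H.obj C ⟶ C} {e : C ⟶ H.obj C}
    (he : IsAlgHom H c (H.map c) e) {q : C ⟶ B} (hq : q = e ≫ H.map q ≫ b) :
    IsAlgHom H c b q := by
  -- both sides solve the coalgebra `H.map e`
  have hcq : c ≫ q = H.map e ≫ H.map (c ≫ q) ≫ b := by
    conv_lhs => rw [hq, ← Category.assoc, he]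
    simp only [H.map_comp, Category.assoc]
  have hqb : H.map q ≫ b = H.map e ≫ H.map (H.map q ≫ b) ≫ b := by
    conv_lhs => rw [hq]
    rw [H.map_comp, H.map_comp, Category.assoc]
  exact (hb _ (H.map e)).unique hcq hqb

lemma isAlgHom_solution_iff {F X B : A} {δ : H.obj F ⟶ F} {η : X ⟶ F} {b : H.obj B ⟶ B}
    (hext : ∀ {f g : F ⟶ B}, IsAlgHom H δ b f → IsAlgHom H δ b g → η ≫ f = η ≫ g → f = g)
    {m : F ⟶ H.obj F} (hm : IsAlgHom H δ (H.map δ) m) {e₀ : X ⟶ H.obj F}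
    (hm_unit : η ≫ m = e₀) {f : F ⟶ B} (hf : IsAlgHom H δ b f) :
    f = m ≫ H.map f ≫ b ↔ η ≫ f = e₀ ≫ δ ≫ f := by
  have hunit : η ≫ m ≫ H.map f ≫ b = e₀ ≫ δ ≫ f := by
    rw [← Category.assoc, hm_unit, hf]
  constructor
  · intro hfix
    conv_lhs => rw [hfix]
    exact hunit
  · intro hfix
    have hsol : IsAlgHom H δ b (m ≫ H.map f ≫ b) := by
      simpa only [Category.assoc] using (hm.comp hf.map).comp (isAlgHom_str b)
    exact hext hf hsol (hfix.trans hunit.symm)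

end

/-- The monad `M` of free corecursive algebras is corecursive: every ideal equation
morphism `e = e₀ ≫ δ X` has a unique solution `s = e ≫ M.map s ≫ ā` in every corecursive
algebra `(A₀, a)` with induced Eilenberg-Moore structure `ā : M A₀ ⟶ A₀`. -/
theorem free_corecursive_monad_is_corecursive
    (H : A ⥤ A) (M : A ⥤ A)
    (δ : ∀ Y : A, H.obj (M.obj Y) ⟶ M.obj Y) (η : ∀ Y : A, Y ⟶ M.obj Y)
    (hcor : ∀ Y : A, IsCorecursiveAlg H (M.obj Y) (δ Y))
    (hfree : ∀ (Y B₀ : A) (b : H.obj B₀ ⟶ B₀), IsCorecursiveAlg H B₀ b →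
      ∀ g : Y ⟶ B₀, ∃! h : M.obj Y ⟶ B₀, (δ Y ≫ h = H.map h ≫ b) ∧ η Y ≫ h = g)
    (hmap : ∀ {Y Z : A} (f : Y ⟶ Z),
      (δ Y ≫ M.map f = H.map (M.map f) ≫ δ Z) ∧ η Y ≫ M.map f = f ≫ η Z)
    (X A₀ : A) (e₀ : X ⟶ H.obj (M.obj X))
    (a : H.obj A₀ ⟶ A₀) (ha : IsCorecursiveAlg H A₀ a)
    (abar : M.obj A₀ ⟶ A₀)
    (habar : δ A₀ ≫ abar = H.map abar ≫ a) (hunit : η A₀ ≫ abar = 𝟙 A₀) :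
    ∃! s : X ⟶ A₀, s = (e₀ ≫ δ X) ≫ M.map s ≫ abar := by
  have hext : ∀ {f g : M.obj X ⟶ A₀}, IsAlgHom H (δ X) a f → IsAlgHom H (δ X) a g →
      η X ≫ f = η X ≫ g → f = g :=
    fun hf hg hfg => (hfree X A₀ a ha _).unique ⟨hf, hfg⟩ ⟨hg, rfl⟩
  have hbar (s : X ⟶ A₀) : IsAlgHom H (δ X) a (M.map s ≫ abar) :=
    IsAlgHom.comp (hmap s).1 habar
  have hbar_unit (s : X ⟶ A₀) : η X ≫ M.map s ≫ abar = s := by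
    rw [← Category.assoc, (hmap s).2, Category.assoc, hunit, Category.comp_id]
  obtain ⟨m, ⟨hm, hm_unit⟩, -⟩ := hfree X _ _ (hcor X).map e₀
  obtain ⟨q, hq, hq_uniq⟩ := ha _ m
  have hq_hom : IsAlgHom H (δ X) a q := ha.isAlgHom_of_solution hm hq
  have hq_bar : q = M.map (η X ≫ q) ≫ abar := hext hq_hom (hbar _) (hbar_unit _).symm
  refine ⟨η X ≫ q, ?_, fun s (hs : s = _) => ?_⟩
  · show η X ≫ q = _
    rw [Category.assoc, ← hq_bar]
    exact (isAlgHom_solution_iff hext hm hm_unit hq_hom).1 hq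
  · have hs_bar := (hbar_unit s).trans (hs.trans (Category.assoc _ _ _))
    rw [← hbar_unit s, hq_uniq _ ((isAlgHom_solution_iff hext hm hm_unit (hbar s)).2 hs_bar)]
end

section
/- In any corecursive ideal monad S on a category, the double iteration identity holds: for every ideal equation morphism e : X → SX, letting ê = μ_X ∘ Se : SX → SX, one has e† = (ê ∘ e)†, where † denotes the unique solution operation. -/
/-!
Substituting the fixpoint equation `s = e ≫ T.map s ≫ μ` into itself and reassociating the Kleisli
composite shows that every solution of `e` also solves `ê ∘ e`. Since `ê ∘ e` is again ideal, its
solution is unique, so both solutions coincide.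
-/

open CategoryTheory CategoryTheory.Limits

universe v u

variable {A : Type u} [Category.{v} A]

namespace CategoryTheory.Monad

variable {X Y Z W : A}

theorem kleisli_comp_assoc (T : CategoryTheory.Monad A) (f : X ⟶ T.obj Y) (g : Y ⟶ T.obj Z)
    (h : Z ⟶ T.obj W) :
    (f ≫ T.map g ≫ T.μ.app Z) ≫ T.map h ≫ T.μ.app W =
      f ≫ T.map (g ≫ T.map h ≫ T.μ.app W) ≫ T.μ.app W := by
  simp only [Functor.map_comp, Category.assoc]
  rw [← T.μ.naturality_assoc, ← T.assoc, Functor.comp_map]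

theorem solution_solves_double_iteration (T : CategoryTheory.Monad A) (e : X ⟶ T.obj X)
    (s : X ⟶ T.obj Y) (hs : s = e ≫ T.map s ≫ T.μ.app Y) :
    s = (e ≫ T.map e ≫ T.μ.app X) ≫ T.map s ≫ T.μ.app Y :=
  calc s = e ≫ T.map s ≫ T.μ.app Y := hs
    _ = e ≫ T.map (e ≫ T.map s ≫ T.μ.app Y) ≫ T.μ.app Y := by conv_lhs => rw [hs]
    _ = (e ≫ T.map e ≫ T.μ.app X) ≫ T.map s ≫ T.μ.app Y := (T.kleisli_comp_assoc e e s).symm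

def IsIdeal {T S' : A ⥤ A} (σ : S' ⟶ T) (f : X ⟶ T.obj Y) : Prop :=
  ∃ f₀ : X ⟶ S'.obj Y, f = f₀ ≫ σ.app Y

theorem IsIdeal.kleisli_comp (T : CategoryTheory.Monad A) {S' : A ⥤ A} {σ : S' ⟶ T.toFunctor}
    (μ' : T.toFunctor ⋙ S' ⟶ S')
    (hμ' : ∀ X : A, μ'.app X ≫ σ.app X = σ.app (T.obj X) ≫ T.μ.app X)
    {f : X ⟶ T.obj Y} (hf : IsIdeal σ f) (g : Y ⟶ T.obj Z) :
    IsIdeal σ (f ≫ T.map g ≫ T.μ.app Z) := by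
  obtain ⟨f₀, rfl⟩ := hf
  refine ⟨f₀ ≫ S'.map g ≫ μ'.app Z, ?_⟩
  simp only [Category.assoc, hμ', σ.naturality_assoc]

end CategoryTheory.Monad

theorem double_iteration_identity_general (T : CategoryTheory.Monad A)
    (S' : A ⥤ A) (σ : S' ⟶ T.toFunctor)
    (μ' : T.toFunctor ⋙ S' ⟶ S')
    (hμ' : ∀ X : A, μ'.app X ≫ σ.app X = σ.app (T.toFunctor.obj X) ≫ T.μ.app X)
    (hcorec : ∀ (X : A) (e : X ⟶ T.toFunctor.obj X),
      (∃ e₀ : X ⟶ S'.obj X, e = e₀ ≫ σ.app X) →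
      ∀ Y : A, ∃! s : X ⟶ T.toFunctor.obj Y, s = e ≫ T.toFunctor.map s ≫ T.μ.app Y)
    (X : A) (e : X ⟶ T.toFunctor.obj X)
    (hideal : ∃ e₀ : X ⟶ S'.obj X, e = e₀ ≫ σ.app X)
    (Y : A) (s s' : X ⟶ T.toFunctor.obj Y)
    (hs : s = e ≫ T.toFunctor.map s ≫ T.μ.app Y)
    (hs' : s' = (e ≫ T.toFunctor.map e ≫ T.μ.app X) ≫ T.toFunctor.map s' ≫ T.μ.app Y) :
    s = s' := by
  have hdouble : Monad.IsIdeal σ (e ≫ T.map e ≫ T.μ.app X) :=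
    Monad.IsIdeal.kleisli_comp T μ' hμ' hideal e
  obtain ⟨_, _, huniq⟩ := hcorec X _ hdouble Y
  exact (huniq s (T.solution_solves_double_iteration e s hs)).trans (huniq s' hs').symm

/-- In a corecursive ideal monad, the double iteration identity holds: for an ideal
equation morphism `e : X ⟶ S X` and `ê = S e ≫ μ_X`, the solutions of `e` and of
`ê ∘ e` coincide. -/
theorem double_iteration_identity (T : CategoryTheory.Monad A)
    (S' : A ⥤ A) (σ : S' ⟶ T.toFunctor)
    (hcop : ∀ X : A, Nonempty (IsColimit (BinaryCofan.mk (σ.app X) (T.η.app X))))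
    (μ' : T.toFunctor ⋙ S' ⟶ S')
    (hμ' : ∀ X : A, μ'.app X ≫ σ.app X = σ.app (T.toFunctor.obj X) ≫ T.μ.app X)
    (hcorec : ∀ (X : A) (e : X ⟶ T.toFunctor.obj X),
      (∃ e₀ : X ⟶ S'.obj X, e = e₀ ≫ σ.app X) →
      ∀ Y : A, ∃! s : X ⟶ T.toFunctor.obj Y, s = e ≫ T.toFunctor.map s ≫ T.μ.app Y)
    (X : A) (e : X ⟶ T.toFunctor.obj X)
    (hideal : ∃ e₀ : X ⟶ S'.obj X, e = e₀ ≫ σ.app X)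
    (Y : A) (s s' : X ⟶ T.toFunctor.obj Y)
    (hs : s = e ≫ T.toFunctor.map s ≫ T.μ.app Y)
    (hs' : s' = (e ≫ T.toFunctor.map e ≫ T.μ.app X) ≫ T.toFunctor.map s' ≫ T.μ.app Y) :
    s = s' :=
  double_iteration_identity_general T S' σ μ' hμ' hcorec X e hideal Y s s' hs hs'
end

section
/- In any corecursive ideal monad S, the parameter identity holds: for an ideal equation morphism e : X → SX with solutions e†_Y : X → SY and e†_Z : X → SZ, and any morphism h : Y → SZ, letting ĥ = μ_Z ∘ Sh : SY → SZ, one has e†_Z = ĥ ∘ e†_Y. -/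
open CategoryTheory CategoryTheory.Limits

universe v u

variable {A : Type u} [Category.{v} A]

theorem CategoryTheory.Monad.solution_comp_kleisliExtension (T : Monad A) {X Y Z : A}
    (e : X ⟶ T.obj X) (s : X ⟶ T.obj Y) (hs : s = e ≫ T.map s ≫ T.μ.app Y)
    (h : Y ⟶ T.obj Z) :
    s ≫ T.map h ≫ T.μ.app Z = e ≫ T.map (s ≫ T.map h ≫ T.μ.app Z) ≫ T.μ.app Z := by
  conv_lhs => rw [hs]
  simp only [Category.assoc, Functor.map_comp]
  rw [← T.μ.naturality_assoc h, ← Monad.assoc]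
  rfl

theorem parameter_identity_general (T : CategoryTheory.Monad A)
    (S' : A ⥤ A) (σ : S' ⟶ T.toFunctor)
    (hcorec : ∀ (X : A) (e : X ⟶ T.toFunctor.obj X),
      (∃ e₀ : X ⟶ S'.obj X, e = e₀ ≫ σ.app X) →
      ∀ Y : A, ∃! s : X ⟶ T.toFunctor.obj Y, s = e ≫ T.toFunctor.map s ≫ T.μ.app Y)
    (X : A) (e : X ⟶ T.toFunctor.obj X)
    (hideal : ∃ e₀ : X ⟶ S'.obj X, e = e₀ ≫ σ.app X)
    (Y Z : A) (h : Y ⟶ T.toFunctor.obj Z)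
    (sY : X ⟶ T.toFunctor.obj Y) (sZ : X ⟶ T.toFunctor.obj Z)
    (hsY : sY = e ≫ T.toFunctor.map sY ≫ T.μ.app Y)
    (hsZ : sZ = e ≫ T.toFunctor.map sZ ≫ T.μ.app Z) :
    sZ = sY ≫ T.toFunctor.map h ≫ T.μ.app Z :=
  (hcorec X e hideal Z).unique hsZ (T.solution_comp_kleisliExtension e sY hsY h)

/-- In a corecursive ideal monad, the parameter identity holds: for an ideal equation
morphism `e : X ⟶ S X` with solutions `s_Y : X ⟶ S Y` and `s_Z : X ⟶ S Z`, and for any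
`h : Y ⟶ S Z` with `ĥ = S h ≫ μ_Z`, one has `s_Z = s_Y ≫ ĥ`. -/
theorem parameter_identity (T : CategoryTheory.Monad A)
    (S' : A ⥤ A) (σ : S' ⟶ T.toFunctor)
    (hcop : ∀ X : A, Nonempty (IsColimit (BinaryCofan.mk (σ.app X) (T.η.app X))))
    (μ' : T.toFunctor ⋙ S' ⟶ S')
    (hμ' : ∀ X : A, μ'.app X ≫ σ.app X = σ.app (T.toFunctor.obj X) ≫ T.μ.app X)
    (hcorec : ∀ (X : A) (e : X ⟶ T.toFunctor.obj X),
      (∃ e₀ : X ⟶ S'.obj X, e = e₀ ≫ σ.app X) →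
      ∀ Y : A, ∃! s : X ⟶ T.toFunctor.obj Y, s = e ≫ T.toFunctor.map s ≫ T.μ.app Y)
    (X : A) (e : X ⟶ T.toFunctor.obj X)
    (hideal : ∃ e₀ : X ⟶ S'.obj X, e = e₀ ≫ σ.app X)
    (Y Z : A) (h : Y ⟶ T.toFunctor.obj Z)
    (sY : X ⟶ T.toFunctor.obj Y) (sZ : X ⟶ T.toFunctor.obj Z)
    (hsY : sY = e ≫ T.toFunctor.map sY ≫ T.μ.app Y)
    (hsZ : sZ = e ≫ T.toFunctor.map sZ ≫ T.μ.app Z) :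
    sZ = sY ≫ T.toFunctor.map h ≫ T.μ.app Z :=
  parameter_identity_general T S' σ hcorec X e hideal Y Z h sY sZ hsY hsZ
end
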